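/- Let N be a rooted binary phylogenetic network on X, let (a, b) be a reticulated cherry of N, and let N' be obtained from N by cutting (a, b). If A ⊆ X with b ∉ A, then the network exhibited by N on A equals the network exhibited by N' on A. -/

import Mathlib

open scoped Classical

/-- A directed graph with a finite vertex set and a multiset of arcs
(so that parallel arcs can be represented). -/
structure Digraph' (α : Type*) where
  V : Finset α
  E : Multiset (α × α)

namespace Digraph'

variable {α : Type*} [DecidableEq α]

/-- In-degree of a vertex. -/
noncomputable def inDeg (G : Digraph' α) (v : α) : ℕ :=
  (G.E.filter (fun e => e.2 = v)).card

/-- Out-degree of a vertex. -/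
noncomputable def outDeg (G : Digraph' α) (v : α) : ℕ :=
  (G.E.filter (fun e => e.1 = v)).card

/-- A (directed) path, given as its nonempty list of vertices. -/
def IsPath (G : Digraph' α) (p : List α) : Prop :=
  p ≠ [] ∧ (∀ v ∈ p, v ∈ G.V) ∧ p.Chain' (fun u v => (u, v) ∈ G.E)

/-- A directed path from `u` to `v`. -/
def PathFrom (G : Digraph' α) (u v : α) (p : List α) : Prop :=
  G.IsPath p ∧ p.head? = some u ∧ p.getLast? = some v

/-- There is a directed path from `u` to `v` (possibly trivial). -/
def Reaches (G : Digraph' α) (u v : α) : Prop := ∃ p, G.PathFrom u v p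

/-- Acyclicity: no arc whose head reaches its tail. -/
def Acyclic (G : Digraph' α) : Prop := ∀ e ∈ G.E, ¬ G.Reaches e.2 e.1

/-- `u` is a stable ancestor of `X'` (w.r.t. root `ρ`): every path from
`ρ` to each `x ∈ X'` traverses `u`. -/
def StableAncestor (G : Digraph' α) (ρ : α) (X' : Finset α) (u : α) : Prop :=
  ∀ x ∈ X', ∀ p, G.PathFrom ρ x p → u ∈ p

/-- `u` is a lowest stable ancestor of `X'`: it is a stable ancestor and
no distinct stable ancestor of `X'` is a descendant of `u`. -/
def IsLowestSA (G : Digraph' α) (ρ : α) (X' : Finset α) (u : α) : Prop :=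
  G.StableAncestor ρ X' u ∧
    ∀ v, G.StableAncestor ρ X' v → v ≠ u → ¬ G.Reaches u v

/-- Delete a vertex together with all incident arcs. -/
noncomputable def deleteVertex (G : Digraph' α) (w : α) : Digraph' α :=
  ⟨G.V.erase w, G.E.filter (fun e => e.1 ≠ w ∧ e.2 ≠ w)⟩

/-- `G'` is obtained from `G` by suppressing the in-degree-one
out-degree-one vertex `w` (replacing `(p,w)`, `(w,c)` by the arc `(p,c)`). -/
def Suppress (G : Digraph' α) (w : α) (G' : Digraph' α) : Prop :=
  G.inDeg w = 1 ∧ G.outDeg w = 1 ∧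
  ∃ p c, (p, w) ∈ G.E ∧ (w, c) ∈ G.E ∧
    G'.V = G.V.erase w ∧ G'.E = (G.deleteVertex w).E + {(p, c)}

/-- `G'` is obtained from `G` by deleting exactly one arc of a pair of
parallel arcs. -/
def DeleteParallel (G G' : Digraph' α) : Prop :=
  ∃ e : α × α, 2 ≤ G.E.count e ∧ G'.V = G.V ∧ G'.E = G.E.erase e

/-- One simplification step: suppress a degree-(1,1) vertex or delete a
parallel arc. -/
def SimpStep (G G' : Digraph' α) : Prop :=
  (∃ w, G.Suppress w G') ∨ G.DeleteParallel G'

/-- `G'` is the full simplification of `G`. -/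
def FullSimp (G G' : Digraph' α) : Prop :=
  Relation.ReflTransGen (SimpStep (α := α)) G G' ∧ ∀ G'', ¬ SimpStep G' G''

/-- The path graph of `G` on `A` (w.r.t. the vertex `r`): all vertices and
arcs lying on a directed path from `r` to a leaf in `A`. -/
noncomputable def pathGraph (G : Digraph' α) (r : α) (A : Finset α) : Digraph' α :=
  ⟨G.V.filter (fun v => ∃ x ∈ A, ∃ p, G.PathFrom r x p ∧ v ∈ p),
   G.E.filter (fun e => ∃ x ∈ A, ∃ p, G.PathFrom r x p ∧ e ∈ p.zip p.tail)⟩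

/-- Isomorphism of digraphs fixing every element of `A`. -/
def IsoOn (G1 G2 : Digraph' α) (A : Finset α) : Prop :=
  ∃ φ : α → α, Set.BijOn φ ↑G1.V ↑G2.V ∧ (∀ x ∈ A, φ x = x) ∧
    G2.E = G1.E.map (fun e => (φ e.1, φ e.2))

end Digraph'

/-- A rooted binary phylogenetic network on the leaf set `X`. -/
structure PhyloNet (α : Type*) where
  G : Digraph' α
  root : α
  X : Finset α
  root_mem : root ∈ G.V
  wf : ∀ e ∈ G.E, e.1 ∈ G.V ∧ e.2 ∈ G.V
  noParallel : ∀ e : α × α, G.E.count e ≤ 1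
  acyclic : G.Acyclic
  reach : ∀ v ∈ G.V, G.Reaches root v
  binary :
    (G.V = {root} ∧ G.E = 0 ∧ X = {root}) ∨
    (G.inDeg root = 0 ∧ G.outDeg root = 2 ∧
     (∀ x ∈ X, x ∈ G.V ∧ G.inDeg x = 1 ∧ G.outDeg x = 0) ∧
     (∀ v ∈ G.V, G.outDeg v = 0 → v ∈ X) ∧
     (∀ v ∈ G.V, v ≠ root → v ∉ X →
       (G.inDeg v = 1 ∧ G.outDeg v = 2) ∨ (G.inDeg v = 2 ∧ G.outDeg v = 1)))

namespace PhyloNet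

variable {α : Type*} [DecidableEq α]

/-- `N` is recoverable: the root is the only stable ancestor of `X`. -/
def Recoverable (N : PhyloNet α) : Prop :=
  ∀ v, N.G.StableAncestor N.root N.X v → v = N.root

/-- `{a, b}` is a cherry: two distinct leaves with a common parent. -/
def Cherry (N : PhyloNet α) (a b : α) : Prop :=
  a ∈ N.X ∧ b ∈ N.X ∧ a ≠ b ∧ ∃ p, (p, a) ∈ N.G.E ∧ (p, b) ∈ N.G.E

/-- `(a, b)` is a reticulated cherry: leaves `a, b` whose parents `p_a, p_b`
satisfy that `(p_a, p_b)` is an arc and `p_b` is a reticulation. -/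
def RetCherry (N : PhyloNet α) (a b : α) : Prop :=
  a ∈ N.X ∧ b ∈ N.X ∧ a ≠ b ∧
  ∃ pa pb, (pa, a) ∈ N.G.E ∧ (pb, b) ∈ N.G.E ∧ (pa, pb) ∈ N.G.E ∧
    N.G.inDeg pb = 2

/-- `N'` is obtained from `N` by reducing the leaf `b` of the cherry `{a, b}`:
delete `b` and its incident arc and suppress the resulting degree-two
vertex (or, if the common parent is the root, replace `N` by the
single-vertex network on `a`). -/
def ReduceCherry (N : PhyloNet α) (a b : α) (N' : PhyloNet α) : Prop :=
  N.Cherry a b ∧ N'.X = N.X.erase b ∧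
  ∃ p, (p, a) ∈ N.G.E ∧ (p, b) ∈ N.G.E ∧
    ((p = N.root ∧ N'.G.V = {a} ∧ N'.G.E = 0 ∧ N'.root = a) ∨
     (p ≠ N.root ∧ N'.root = N.root ∧ (N.G.deleteVertex b).Suppress p N'.G))

/-- `N'` is obtained from `N` by cutting the reticulated cherry `(a, b)`:
delete the reticulation arc `(p_a, p_b)` and suppress the two resulting
degree-two vertices. -/
def CutRetCherry (N : PhyloNet α) (a b : α) (N' : PhyloNet α) : Prop :=
  a ∈ N.X ∧ b ∈ N.X ∧ a ≠ b ∧ N'.X = N.X ∧ N'.root = N.root ∧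
  ∃ pa pb, (pa, a) ∈ N.G.E ∧ (pb, b) ∈ N.G.E ∧ (pa, pb) ∈ N.G.E ∧
    N.G.inDeg pb = 2 ∧
    ∃ G1 : Digraph' α, G1.V = N.G.V ∧ G1.E = N.G.E.erase (pa, pb) ∧
      ∃ G2 : Digraph' α, G1.Suppress pa G2 ∧ G2.Suppress pb N'.G

/-- One cherry-picking step: reduce a leaf of a cherry or cut a
reticulated cherry. -/
def PickStep (N N' : PhyloNet α) : Prop :=
  (∃ a b, N.ReduceCherry a b N') ∨ (∃ a b, N.CutRetCherry a b N')

/-- `N` is an orchard network: some sequence of cherry-picking operations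
reduces it to a single vertex. -/
def IsOrchard (N : PhyloNet α) : Prop :=
  ∃ M : PhyloNet α, Relation.ReflTransGen (PickStep (α := α)) N M ∧ M.G.V.card = 1

/-- `H` is the network exhibited by `N` on `A`: the full simplification of
the path graph of `N` on `A`, rooted at the lowest stable ancestor of `A`. -/
def Exhibits (N : PhyloNet α) (A : Finset α) (H : Digraph' α) : Prop :=
  ∃ r, N.G.IsLowestSA N.root A r ∧ Digraph'.FullSimp (N.G.pathGraph r A) H

end PhyloNet

/-!
Paths of `N` from a vertex other than `pa` to a leaf other than `b` never meet `pb`, and they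
meet `pa` only in a final segment `p → pa → a`. Bypassing `pa` turns them into exactly the paths
of `N'` to the same leaves (with `p → a` in place of `p → pa → a`). Hence `N` and `N'` have the
same stable ancestors of `A` apart from `pa`, the same lowest stable ancestor `r ≠ pa`, and the
path graph of `N'` on `A` is either the path graph of `N` or obtained from it by suppressing `pa`.
Full simplification of a DAG is confluent (suppressions and parallel-arc deletions commute), so
both path graphs have the same full simplification.
-/

open List Relation

lemma Multiset.filter_erase {β : Type*} [DecidableEq β] (s : Multiset β) (a : β)
    (P : β → Prop) [DecidablePred P] : (s.erase a).filter P = (s.filter P).erase a := by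
  ext x
  by_cases hx : x = a
  · subst hx
    by_cases hP : P x <;> simp [hP]
  · simp [Multiset.count_filter, Multiset.count_erase_of_ne hx]

namespace Digraph'

variable {α : Type*}

def pathArcs (l : List α) : List (α × α) := l.zip l.tail

@[simp] lemma pathArcs_nil : pathArcs ([] : List α) = [] := rfl

@[simp] lemma pathArcs_singleton (a : α) : pathArcs [a] = [] := rfl

@[simp] lemma pathArcs_cons_cons (a b : α) (l : List α) :
    pathArcs (a :: b :: l) = (a, b) :: pathArcs (b :: l) := rfl

lemma pathArcs_append_cons (l t : List α) (u : α) :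
    pathArcs (l ++ u :: t) = pathArcs (l ++ [u]) ++ pathArcs (u :: t) := by
  induction l with
  | nil => rfl
  | cons a l ih => cases l <;> simp_all

lemma mem_of_mem_pathArcs {l : List α} {e : α × α} (h : e ∈ pathArcs l) :
    e.1 ∈ l ∧ e.2 ∈ l :=
  ⟨(of_mem_zip h).1, mem_of_mem_tail (of_mem_zip h).2⟩

lemma isChain_iff_forall_mem_pathArcs {R : α → α → Prop} {l : List α} :
    l.IsChain R ↔ ∀ e ∈ pathArcs l, R e.1 e.2 := by
  induction l with
  | nil => simp
  | cons a l ih => cases l <;> simp_all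

@[ext] lemma ext {G H : Digraph' α} (hV : G.V = H.V) (hE : G.E = H.E) : G = H := by
  cases G; cases H; simp_all

section Paths

variable {G H : Digraph' α} {u v w x : α} {p : List α}

lemma PathFrom.ne_nil (h : G.PathFrom u v p) : p ≠ [] := h.1.1

lemma PathFrom.mem_V (h : G.PathFrom u v p) : ∀ z ∈ p, z ∈ G.V := h.1.2.1

lemma PathFrom.mem_E (h : G.PathFrom u v p) : ∀ e ∈ pathArcs p, e ∈ G.E :=
  isChain_iff_forall_mem_pathArcs.mp h.1.2.2

lemma PathFrom.start_mem (h : G.PathFrom u v p) : u ∈ p := mem_of_mem_head? h.2.1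

lemma PathFrom.end_mem (h : G.PathFrom u v p) : v ∈ p := mem_of_mem_getLast? h.2.2

lemma pathFrom_singleton (hu : u ∈ G.V) : G.PathFrom u u [u] :=
  ⟨⟨by simp, by simpa using hu, isChain_singleton u⟩, rfl, rfl⟩

lemma PathFrom.mono (h : G.PathFrom u v p) (hV : ∀ z ∈ p, z ∈ H.V)
    (hE : ∀ e ∈ pathArcs p, e ∈ H.E) : H.PathFrom u v p :=
  ⟨⟨h.ne_nil, hV, isChain_iff_forall_mem_pathArcs.mpr hE⟩, h.2⟩

lemma PathFrom.snoc (h : G.PathFrom u v p) (he : (v, w) ∈ G.E) (hw : w ∈ G.V) :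
    G.PathFrom u w (p ++ [w]) := by
  obtain ⟨⟨hne, hV, hc⟩, hh, hl⟩ := h
  refine ⟨⟨by simp, ?_, ?_⟩, by rw [head?_append_of_ne_nil _ hne]; exact hh, by simp⟩
  · simpa [or_imp, forall_and] using ⟨hV, hw⟩
  · refine isChain_append.mpr ⟨hc, by simp, fun a ha b hb => ?_⟩
    simp only [hl, Option.mem_def, Option.some.injEq, head?_cons] at ha hb
    exact ha ▸ hb ▸ he

lemma PathFrom.prefix {s t : List α} (h : G.PathFrom u v (s ++ w :: t)) :
    G.PathFrom u w (s ++ [w]) := by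
  refine ⟨⟨by simp, fun z hz => h.mem_V z ?_, h.1.2.2.prefix ⟨t, by simp⟩⟩, ?_, by simp⟩
  · simp only [mem_append, mem_cons] at hz ⊢; tauto
  · have h1 := h.2.1
    rwa [show s ++ w :: t = (s ++ [w]) ++ t by simp, head?_append_of_ne_nil _ (by simp)] at h1

lemma PathFrom.suffix {s t : List α} (h : G.PathFrom u v (s ++ w :: t)) :
    G.PathFrom w v (w :: t) := by
  refine ⟨⟨by simp, fun z hz => h.mem_V z (mem_append_right _ hz), h.1.2.2.suffix ⟨s, rfl⟩⟩,
    rfl, ?_⟩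
  have h1 := h.2.2
  rwa [getLast?_append_of_ne_nil _ (by simp)] at h1

lemma PathFrom.exists_mem_pathArcs (h : G.PathFrom u v p) (hw : w ∈ p) (hwv : w ≠ v) :
    ∃ z, (w, z) ∈ pathArcs p := by
  obtain ⟨s, t, rfl⟩ := append_of_mem hw
  cases t with
  | nil => exact absurd (by simpa using h.2.2) hwv
  | cons z t => exact ⟨z, by rw [pathArcs_append_cons]; simp⟩

lemma PathFrom.eq_of_mem_of_notMem_E (h : G.PathFrom u v p) (hw : w ∈ p)
    (hno : ∀ z, (w, z) ∉ G.E) : w = v := by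
  by_contra hwv
  obtain ⟨z, hz⟩ := h.exists_mem_pathArcs hw hwv
  exact hno z (h.mem_E _ hz)

lemma PathFrom.eq_singleton (h : G.PathFrom u v p) (hno : ∀ z, (u, z) ∉ G.E) : p = [u] := by
  obtain ⟨t, rfl⟩ : ∃ t, p = u :: t := by
    cases p with
    | nil => exact absurd rfl h.ne_nil
    | cons y t => exact ⟨t, by simpa using h.2.1⟩
  cases t with
  | nil => rfl
  | cons z t => exact absurd (h.mem_E (u, z) (by simp)) (hno z)

lemma PathFrom.exists_last_arc (h : G.PathFrom u v p) (huv : u ≠ v) :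
    ∃ q y, p = q ++ [y, v] ∧ G.PathFrom u y (q ++ [y]) ∧ (y, v) ∈ G.E := by
  obtain ⟨l, rfl⟩ := getLast?_eq_some_iff.mp h.2.2
  rcases eq_nil_or_concat l with rfl | ⟨q, y, rfl⟩
  · exact absurd (by simpa using h.2.1.symm) huv
  rw [concat_eq_append, append_assoc, singleton_append] at h ⊢
  exact ⟨q, y, rfl, h.prefix, h.suffix.mem_E (y, v) (by simp)⟩

lemma PathFrom.nodup (hG : G.Acyclic) (h : G.PathFrom u v p) : p.Nodup := by
  induction p generalizing u with
  | nil => simp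
  | cons y t ih =>
    cases t with
    | nil => simp
    | cons z t =>
      have hz : G.PathFrom z v (z :: t) := h.suffix (s := [y])
      refine nodup_cons.mpr ⟨fun hy => ?_, ih hz⟩
      obtain ⟨s, t', hst⟩ := append_of_mem hy
      rw [hst] at hz
      exact hG (y, z) (h.mem_E _ (by simp)) ⟨_, hz.prefix⟩

lemma PathFrom.reaches_or_reaches (h : G.PathFrom u v p) (hw : w ∈ p) (hx : x ∈ p) :
    G.Reaches w x ∨ G.Reaches x w := by
  obtain ⟨s, t, rfl⟩ := append_of_mem hw
  rcases mem_append.mp hx with hxs | hxt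
  · obtain ⟨s', t', hst⟩ := append_of_mem (mem_append_left [w] hxs)
    have hp := h.prefix
    rw [hst] at hp
    exact Or.inr ⟨_, hp.suffix⟩
  · obtain ⟨s', t', hst⟩ := append_of_mem hxt
    have hp := h.suffix
    rw [hst] at hp
    exact Or.inl ⟨_, hp.prefix⟩

lemma reaches_iff (hV : ∀ e ∈ G.E, e.1 ∈ G.V ∧ e.2 ∈ G.V) :
    G.Reaches u v ↔ u ∈ G.V ∧ ReflTransGen (fun x y => (x, y) ∈ G.E) u v := by
  constructor
  · rintro ⟨p, hp⟩
    refine ⟨hp.mem_V u hp.start_mem, ?_⟩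
    induction p generalizing u with
    | nil => exact absurd rfl hp.ne_nil
    | cons y t ih =>
      obtain rfl : y = u := by simpa using hp.2.1
      cases t with
      | nil =>
        obtain rfl : y = v := by simpa using hp.2.2
        exact .refl
      | cons z t => exact .head (hp.mem_E _ (by simp)) (ih (hp.suffix (s := [y])))
  · rintro ⟨hu, hr⟩
    induction hr with
    | refl => exact ⟨[u], pathFrom_singleton hu⟩
    | tail _ he ih =>
      obtain ⟨p, hp⟩ := ih
      exact ⟨_, hp.snoc he (hV _ he).2⟩

lemma Reaches.mono (h : G.Reaches u v) (hV : ∀ z ∈ G.V, z ∈ H.V) (hE : ∀ e ∈ G.E, e ∈ H.E) :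
    H.Reaches u v := by
  obtain ⟨p, hp⟩ := h
  exact ⟨p, hp.mono (fun z hz => hV z (hp.mem_V z hz)) fun e he => hE e (hp.mem_E e he)⟩

structure IsDAG (G : Digraph' α) : Prop where
  mem_V : ∀ e ∈ G.E, e.1 ∈ G.V ∧ e.2 ∈ G.V
  acyclic : G.Acyclic

lemma IsDAG.reaches_of_mem_E (hG : G.IsDAG) (he : (u, v) ∈ G.E) : G.Reaches u v :=
  ⟨[u, v], (pathFrom_singleton (hG.mem_V _ he).1).snoc he (hG.mem_V _ he).2⟩

lemma IsDAG.ne_of_mem_E (hG : G.IsDAG) (he : (u, v) ∈ G.E) : u ≠ v := by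
  rintro rfl
  exact hG.acyclic _ he (hG.reaches_of_mem_E he)

lemma IsDAG.notMem_E_swap (hG : G.IsDAG) (he : (u, v) ∈ G.E) : (v, u) ∉ G.E :=
  fun he' => hG.acyclic _ he (hG.reaches_of_mem_E he')

end Paths

section Simplification

variable [DecidableEq α] {G G' G1 G2 : Digraph' α} {u v w w' x y : α}

lemma filter_snd_eq_of_inDeg_eq_one (h : G.inDeg w = 1) (hx : (x, w) ∈ G.E) :
    G.E.filter (fun e => e.2 = w) = {(x, w)} := by
  obtain ⟨e, he⟩ := Multiset.card_eq_one.mp h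
  have : (x, w) ∈ G.E.filter (fun e => e.2 = w) := Multiset.mem_filter.mpr ⟨hx, rfl⟩
  rw [he, Multiset.mem_singleton] at this
  rw [he, this]

lemma filter_fst_eq_of_outDeg_eq_one (h : G.outDeg w = 1) (hx : (w, x) ∈ G.E) :
    G.E.filter (fun e => e.1 = w) = {(w, x)} := by
  obtain ⟨e, he⟩ := Multiset.card_eq_one.mp h
  have : (w, x) ∈ G.E.filter (fun e => e.1 = w) := Multiset.mem_filter.mpr ⟨hx, rfl⟩
  rw [he, Multiset.mem_singleton] at this
  rw [he, this]

lemma eq_of_inDeg_eq_one (h : G.inDeg w = 1) (hx : (x, w) ∈ G.E) (hy : (y, w) ∈ G.E) :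
    y = x := by
  have : (y, w) ∈ G.E.filter (fun e => e.2 = w) := Multiset.mem_filter.mpr ⟨hy, rfl⟩
  rw [filter_snd_eq_of_inDeg_eq_one h hx] at this
  simpa using this

lemma eq_of_outDeg_eq_one (h : G.outDeg w = 1) (hx : (w, x) ∈ G.E) (hy : (w, y) ∈ G.E) :
    y = x := by
  have : (w, y) ∈ G.E.filter (fun e => e.1 = w) := Multiset.mem_filter.mpr ⟨hy, rfl⟩
  rw [filter_fst_eq_of_outDeg_eq_one h hx] at this
  simpa using this

lemma inDeg_eq_one (hG : G.E.Nodup) (hx : (x, w) ∈ G.E) (h : ∀ y, (y, w) ∈ G.E → y = x) :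
    G.inDeg w = 1 := by
  have : G.E.filter (fun e => e.2 = w) = {(x, w)} := by
    refine ((hG.filter _).ext (Multiset.nodup_singleton _)).mpr fun e => ?_
    simp only [Multiset.mem_filter, Multiset.mem_singleton]
    exact ⟨fun ⟨he, h2⟩ => by rw [← h e.1 (h2 ▸ he), ← h2], by rintro rfl; exact ⟨hx, rfl⟩⟩
  simp [inDeg, this]

lemma outDeg_eq_one (hG : G.E.Nodup) (hx : (w, x) ∈ G.E) (h : ∀ y, (w, y) ∈ G.E → y = x) :
    G.outDeg w = 1 := by
  have : G.E.filter (fun e => e.1 = w) = {(w, x)} := by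
    refine ((hG.filter _).ext (Multiset.nodup_singleton _)).mpr fun e => ?_
    simp only [Multiset.mem_filter, Multiset.mem_singleton]
    exact ⟨fun ⟨he, h1⟩ => by rw [← h e.2 (h1 ▸ he), ← h1], by rintro rfl; exact ⟨hx, rfl⟩⟩
  simp [outDeg, this]

lemma count_le_one_of_inDeg_eq_one (h : G.inDeg w = 1) {e : α × α} (he : e.2 = w) :
    G.E.count e ≤ 1 := by
  rw [← Multiset.count_filter_of_pos (p := fun e : α × α => e.2 = w) he]
  exact (Multiset.count_le_card _ _).trans h.le

lemma count_le_one_of_outDeg_eq_one (h : G.outDeg w = 1) {e : α × α} (he : e.1 = w) :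
    G.E.count e ≤ 1 := by
  rw [← Multiset.count_filter_of_pos (p := fun e : α × α => e.1 = w) he]
  exact (Multiset.count_le_card _ _).trans h.le

lemma Suppress.inDeg_of_ne (h : G.Suppress w G') (hv : v ≠ w) : G'.inDeg v = G.inDeg v := by
  obtain ⟨-, hout, p, c, -, hc, -, hE⟩ := h
  have hsplit := Multiset.filter_add_not (fun e : α × α => e.1 = w) G.E
  rw [filter_fst_eq_of_outDeg_eq_one hout hc] at hsplit
  have hkeep : (G.deleteVertex w).E.filter (fun e => e.2 = v) =
      (G.E.filter fun e => ¬e.1 = w).filter (fun e => e.2 = v) := by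
    simp only [deleteVertex, Multiset.filter_filter]
    exact Multiset.filter_congr fun e _ => by constructor <;> rintro ⟨h1, h2⟩ <;> simp_all
  unfold inDeg
  conv_rhs => rw [← hsplit]
  rw [hE, Multiset.filter_add, Multiset.filter_add, hkeep, Multiset.card_add, Multiset.card_add,
    add_comm]
  congr 1
  by_cases hcv : c = v <;> simp [Multiset.filter_singleton, hcv]

lemma Suppress.outDeg_of_ne (h : G.Suppress w G') (hv : v ≠ w) : G'.outDeg v = G.outDeg v := by
  obtain ⟨hin, -, p, c, hp, -, -, hE⟩ := h
  have hsplit := Multiset.filter_add_not (fun e : α × α => e.2 = w) G.E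
  rw [filter_snd_eq_of_inDeg_eq_one hin hp] at hsplit
  have hkeep : (G.deleteVertex w).E.filter (fun e => e.1 = v) =
      (G.E.filter fun e => ¬e.2 = w).filter (fun e => e.1 = v) := by
    simp only [deleteVertex, Multiset.filter_filter]
    exact Multiset.filter_congr fun e _ => by constructor <;> rintro ⟨h1, h2⟩ <;> simp_all
  unfold outDeg
  conv_rhs => rw [← hsplit]
  rw [hE, Multiset.filter_add, Multiset.filter_add, hkeep, Multiset.card_add, Multiset.card_add,
    add_comm]
  congr 1
  by_cases hpv : p = v <;> simp [Multiset.filter_singleton, hpv]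

lemma mem_deleteVertex_E {e : α × α} :
    e ∈ (G.deleteVertex w).E ↔ e ∈ G.E ∧ e.1 ≠ w ∧ e.2 ≠ w := by
  simp [deleteVertex]

lemma deleteVertex_comm (G : Digraph' α) (v w : α) :
    (G.deleteVertex v).deleteVertex w = (G.deleteVertex w).deleteVertex v := by
  simp only [deleteVertex, Finset.erase_right_comm, Multiset.filter_filter, mk.injEq, true_and]
  exact Multiset.filter_congr fun e _ => by tauto

lemma Suppress.V_eq (h : G.Suppress w G') : G'.V = G.V.erase w := by
  obtain ⟨-, -, p, c, -, -, hV, -⟩ := h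
  exact hV

lemma Suppress.E_eq (h : G.Suppress w G') (hp : (x, w) ∈ G.E) (hc : (w, y) ∈ G.E) :
    G'.E = (G.deleteVertex w).E + {(x, y)} := by
  obtain ⟨hin, hout, p, c, hp', hc', -, hE⟩ := h
  rwa [eq_of_inDeg_eq_one hin hp hp', eq_of_outDeg_eq_one hout hc hc'] at hE

lemma Suppress.exists_arcs (h : G.Suppress w G') : ∃ p c, (p, w) ∈ G.E ∧ (w, c) ∈ G.E := by
  obtain ⟨-, -, p, c, hp, hc, -⟩ := h
  exact ⟨p, c, hp, hc⟩

lemma Suppress.mem_E_of_ne (h : G.Suppress w G') {e : α × α} (he : e ∈ G.E) (h1 : e.1 ≠ w)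
    (h2 : e.2 ≠ w) : e ∈ G'.E := by
  obtain ⟨p, c, hp, hc⟩ := h.exists_arcs
  rw [h.E_eq hp hc]
  exact Multiset.mem_add.mpr (.inl (mem_deleteVertex_E.mpr ⟨he, h1, h2⟩))

lemma Suppress.mem_E_bypass (h : G.Suppress w G') (hp : (x, w) ∈ G.E) (hc : (w, y) ∈ G.E) :
    (x, y) ∈ G'.E := by
  rw [h.E_eq hp hc]
  exact Multiset.mem_add.mpr (.inr (Multiset.mem_singleton_self _))

lemma Suppress.deleteVertex_E (h : G.Suppress w G') (hp : (x, w) ∈ G.E) (hc : (w, y) ∈ G.E)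
    (v : α) : (G'.deleteVertex v).E = ((G.deleteVertex w).deleteVertex v).E +
      ({(x, y)} : Multiset (α × α)).filter (fun e => e.1 ≠ v ∧ e.2 ≠ v) := by
  change G'.E.filter _ = _
  rw [h.E_eq hp hc, Multiset.filter_add]
  rfl

lemma Suppress.unique (h1 : G.Suppress w G') {G'' : Digraph' α} (h2 : G.Suppress w G'') :
    G' = G'' := by
  obtain ⟨p, c, hp, hc⟩ := h1.exists_arcs
  ext1
  · rw [h1.V_eq, h2.V_eq]
  · rw [h1.E_eq hp hc, h2.E_eq hp hc]

lemma Suppress.mem_V (hG : G.IsDAG) (h : G.Suppress w G') :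
    ∀ e ∈ G'.E, e.1 ∈ G'.V ∧ e.2 ∈ G'.V := by
  obtain ⟨p, c, hp, hc⟩ := h.exists_arcs
  intro e he
  rw [h.V_eq, Finset.mem_erase, Finset.mem_erase]
  rcases Multiset.mem_add.mp (h.E_eq hp hc ▸ he) with he | he
  · obtain ⟨he, h1, h2⟩ := mem_deleteVertex_E.mp he
    exact ⟨⟨h1, (hG.mem_V e he).1⟩, h2, (hG.mem_V e he).2⟩
  · obtain rfl := Multiset.mem_singleton.mp he
    exact ⟨⟨hG.ne_of_mem_E hp, (hG.mem_V _ hp).1⟩, (hG.ne_of_mem_E hc).symm, (hG.mem_V _ hc).2⟩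

lemma Suppress.reaches (hG : G.IsDAG) (h : G.Suppress w G') (hr : G'.Reaches u v) :
    G.Reaches u v := by
  obtain ⟨p, c, hp, hc⟩ := h.exists_arcs
  obtain ⟨hu, hr'⟩ := (reaches_iff (h.mem_V hG)).mp hr
  refine (reaches_iff hG.mem_V).mpr ⟨Finset.mem_of_mem_erase (h.V_eq ▸ hu), ?_⟩
  clear hr
  induction hr' with
  | refl => exact .refl
  | tail _ he ih =>
    rcases Multiset.mem_add.mp (h.E_eq hp hc ▸ he) with he | he
    · exact ih.tail (mem_deleteVertex_E.mp he).1
    · obtain ⟨rfl, rfl⟩ := Prod.mk.inj (Multiset.mem_singleton.mp he)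
      exact (ih.tail hp).tail hc

lemma Suppress.isDAG (hG : G.IsDAG) (h : G.Suppress w G') : G'.IsDAG := by
  refine ⟨h.mem_V hG, fun e he hr => ?_⟩
  obtain ⟨p, c, hp, hc⟩ := h.exists_arcs
  have hr := h.reaches hG hr
  rcases Multiset.mem_add.mp (h.E_eq hp hc ▸ he) with he | he
  · exact hG.acyclic e (mem_deleteVertex_E.mp he).1 hr
  · obtain rfl := Multiset.mem_singleton.mp he
    obtain ⟨-, hr⟩ := (reaches_iff hG.mem_V).mp hr
    exact hG.acyclic _ hp ((reaches_iff hG.mem_V).mpr ⟨(hG.mem_V _ hc).1, .head hc hr⟩)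

lemma Suppress.comm_of_mem_E (hG : G.IsDAG) (h1 : G.Suppress w G1) (h2 : G.Suppress w' G2)
    (hww' : (w, w') ∈ G.E) : ∃ D, G1.Suppress w' D ∧ G2.Suppress w D := by
  have hne := hG.ne_of_mem_E hww'
  obtain ⟨p, c, hp, hc⟩ := h1.exists_arcs
  obtain ⟨p', c', hp', hc'⟩ := h2.exists_arcs
  obtain rfl := (eq_of_outDeg_eq_one h1.2.1 hww' hc).symm
  obtain rfl := (eq_of_inDeg_eq_one h2.1 hww' hp').symm
  have hpw' : p ≠ w' := fun h => hG.notMem_E_swap hww' (h ▸ hp)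
  have hc'w : c' ≠ w := fun h => hG.notMem_E_swap hww' (h ▸ hc')
  refine ⟨⟨G1.V.erase w', (G1.deleteVertex w').E + {(p, c')}⟩,
    ⟨(h1.inDeg_of_ne hne.symm).trans h2.1, (h1.outDeg_of_ne hne.symm).trans h2.2.1, p, c',
      h1.mem_E_bypass hp hc, h1.mem_E_of_ne hc' hne.symm hc'w, rfl, rfl⟩,
    ⟨(h2.inDeg_of_ne hne).trans h1.1, (h2.outDeg_of_ne hne).trans h1.2.1, p, c',
      h2.mem_E_of_ne hp hpw' hne, h2.mem_E_bypass hp' hc', ?_, ?_⟩⟩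
  · rw [h1.V_eq, h2.V_eq, Finset.erase_right_comm]
  · rw [h1.deleteVertex_E hp hc, h2.deleteVertex_E hp' hc', deleteVertex_comm]
    simp [Multiset.filter_singleton]

lemma Suppress.comm_of_not_adj (h1 : G.Suppress w G1) (h2 : G.Suppress w' G2) (hne : w ≠ w')
    (hww' : (w, w') ∉ G.E) (hw'w : (w', w) ∉ G.E) : ∃ D, G1.Suppress w' D ∧ G2.Suppress w D := by
  obtain ⟨p, c, hp, hc⟩ := h1.exists_arcs
  obtain ⟨p', c', hp', hc'⟩ := h2.exists_arcs
  have hpw' : p ≠ w' := fun h => hw'w (h ▸ hp)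
  have hcw' : c ≠ w' := fun h => hww' (h ▸ hc)
  have hp'w : p' ≠ w := fun h => hww' (h ▸ hp')
  have hc'w : c' ≠ w := fun h => hw'w (h ▸ hc')
  refine ⟨⟨G1.V.erase w', (G1.deleteVertex w').E + {(p', c')}⟩,
    ⟨(h1.inDeg_of_ne hne.symm).trans h2.1, (h1.outDeg_of_ne hne.symm).trans h2.2.1, p', c',
      h1.mem_E_of_ne hp' hp'w hne.symm, h1.mem_E_of_ne hc' hne.symm hc'w, rfl, rfl⟩,
    ⟨(h2.inDeg_of_ne hne).trans h1.1, (h2.outDeg_of_ne hne).trans h1.2.1, p, c,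
      h2.mem_E_of_ne hp hpw' hne, h2.mem_E_of_ne hc hne hcw', ?_, ?_⟩⟩
  · rw [h1.V_eq, h2.V_eq, Finset.erase_right_comm]
  · rw [h1.deleteVertex_E hp hc, h2.deleteVertex_E hp' hc', deleteVertex_comm]
    simp [Multiset.filter_singleton, hpw', hcw', hp'w, hc'w, add_right_comm]

lemma Suppress.comm (hG : G.IsDAG) (h1 : G.Suppress w G1) (h2 : G.Suppress w' G2)
    (hne : w ≠ w') : ∃ D, G1.Suppress w' D ∧ G2.Suppress w D := by
  by_cases hww' : (w, w') ∈ G.E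
  · exact h1.comm_of_mem_E hG h2 hww'
  by_cases hw'w : (w', w) ∈ G.E
  · exact (h2.comm_of_mem_E hG h1 hw'w).imp fun _ => And.symm
  exact h1.comm_of_not_adj h2 hne hww' hw'w

lemma Suppress.comm_deleteParallel (h1 : G.Suppress w G1) (h2 : G.DeleteParallel G2) :
    ∃ D, G1.DeleteParallel D ∧ G2.Suppress w D := by
  obtain ⟨e, he, hV2, hE2⟩ := h2
  have he2 : e.2 ≠ w := fun h => by have := count_le_one_of_inDeg_eq_one h1.1 h; omega
  have he1 : e.1 ≠ w := fun h => by have := count_le_one_of_outDeg_eq_one h1.2.1 h; omega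
  have heG : e ∈ G.E := Multiset.count_pos.mp (by omega)
  have hdel : e ∈ (G.deleteVertex w).E := mem_deleteVertex_E.mpr ⟨heG, he1, he2⟩
  have hfilter (P : α × α → Prop) [DecidablePred P] (hP : ¬P e) :
      G2.E.filter P = G.E.filter P := by
    rw [hE2, Multiset.filter_erase, Multiset.erase_of_notMem (by simp [hP])]
  obtain ⟨p, c, hp, hc⟩ := h1.exists_arcs
  refine ⟨⟨G1.V, G1.E.erase e⟩, ⟨e, ?_, rfl, rfl⟩,
    ⟨by rw [inDeg, hfilter _ he2]; exact h1.1, by rw [outDeg, hfilter _ he1]; exact h1.2.1, p, c,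
      hE2 ▸ (Multiset.mem_erase_of_ne fun h => he2 (by rw [← h])).mpr hp,
      hE2 ▸ (Multiset.mem_erase_of_ne fun h => he1 (by rw [← h])).mpr hc, by rw [h1.V_eq, hV2], ?_⟩⟩
  · rw [h1.E_eq hp hc, Multiset.count_add]
    have : (G.deleteVertex w).E.count e = G.E.count e :=
      Multiset.count_filter_of_pos (p := fun e : α × α => e.1 ≠ w ∧ e.2 ≠ w) ⟨he1, he2⟩
    omega
  · change G1.E.erase e = G2.E.filter _ + _
    rw [h1.E_eq hp hc, Multiset.erase_add_left_pos _ hdel, hE2, Multiset.filter_erase]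
    rfl

lemma DeleteParallel.isDAG (hG : G.IsDAG) (h : G.DeleteParallel G') : G'.IsDAG := by
  obtain ⟨e, -, hV, hE⟩ := h
  have hsub : ∀ f ∈ G'.E, f ∈ G.E := fun f hf => Multiset.mem_of_mem_erase (hE ▸ hf)
  exact ⟨fun f hf => hV ▸ hG.mem_V f (hsub f hf), fun f hf hr =>
    hG.acyclic f (hsub f hf) (hr.mono (fun z hz => hV ▸ hz) hsub)⟩

lemma SimpStep.isDAG (hG : G.IsDAG) : SimpStep G G' → G'.IsDAG
  | .inl ⟨_, h⟩ => h.isDAG hG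
  | .inr h => h.isDAG hG

lemma DeleteParallel.comm (h1 : G.DeleteParallel G1) (h2 : G.DeleteParallel G2) :
    G1 = G2 ∨ ∃ D, G1.DeleteParallel D ∧ G2.DeleteParallel D := by
  obtain ⟨e1, he1, hV1, hE1⟩ := h1
  obtain ⟨e2, he2, hV2, hE2⟩ := h2
  by_cases he : e1 = e2
  · subst he
    exact .inl (ext (hV1.trans hV2.symm) (hE1.trans hE2.symm))
  refine .inr ⟨⟨G.V, (G.E.erase e1).erase e2⟩, ⟨e2, ?_, hV1.symm, by rw [hE1]⟩,
    ⟨e1, ?_, hV2.symm, by rw [hE2, Multiset.erase_comm]⟩⟩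
  · rwa [hE1, Multiset.count_erase_of_ne (Ne.symm he)]
  · rwa [hE2, Multiset.count_erase_of_ne he]

lemma SimpStep.diamond (hG : G.IsDAG) (h1 : SimpStep G G1) (h2 : SimpStep G G2) :
    G1 = G2 ∨ ∃ D, SimpStep G1 D ∧ SimpStep G2 D := by
  rcases h1 with ⟨w, h1⟩ | h1 <;> rcases h2 with ⟨w', h2⟩ | h2
  · by_cases hw : w = w'
    · subst hw
      exact .inl (h1.unique h2)
    obtain ⟨D, h1', h2'⟩ := h1.comm hG h2 hw
    exact .inr ⟨D, .inl ⟨w', h1'⟩, .inl ⟨w, h2'⟩⟩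
  · obtain ⟨D, h1', h2'⟩ := h1.comm_deleteParallel h2
    exact .inr ⟨D, .inr h1', .inl ⟨w, h2'⟩⟩
  · obtain ⟨D, h2', h1'⟩ := h2.comm_deleteParallel h1
    exact .inr ⟨D, .inl ⟨w', h1'⟩, .inr h2'⟩
  · exact (h1.comm h2).imp_right fun ⟨D, h1', h2'⟩ => ⟨D, .inr h1', .inr h2'⟩

lemma FullSimp.unique (hG : G.IsDAG) (h1 : FullSimp G G1) (h2 : FullSimp G G2) : G1 = G2 := by
  -- Suppressions only commute in acyclic graphs, so the steps are restricted to DAGs.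
  let R : Digraph' α → Digraph' α → Prop := fun X Y => SimpStep X Y ∧ X.IsDAG
  have lift {H : Digraph' α} (h : ReflTransGen SimpStep G H) : ReflTransGen R G H ∧ H.IsDAG := by
    induction h with
    | refl => exact ⟨.refl, hG⟩
    | tail _ hs ih => exact ⟨ih.1.tail ⟨hs, ih.2⟩, hs.isDAG ih.2⟩
  have hdiamond (X Y Z) (hY : R X Y) (hZ : R X Z) : ∃ D, ReflGen R Y D ∧ ReflTransGen R Z D := by
    rcases hY.1.diamond hY.2 hZ.1 with rfl | ⟨D, hYD, hZD⟩
    · exact ⟨Y, .refl, .refl⟩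
    · exact ⟨D, .single ⟨hYD, hY.1.isDAG hY.2⟩, .single ⟨hZD, hZ.1.isDAG hZ.2⟩⟩
  obtain ⟨D, hD1, hD2⟩ := church_rosser hdiamond (lift h1.1).1 (lift h2.1).1
  have normal {H : Digraph' α} (hH : ∀ K, ¬SimpStep H K) (h : ReflTransGen R H D) : H = D := by
    rcases h.cases_head with rfl | ⟨K, hK, -⟩
    · rfl
    · exact absurd hK.1 (hH K)
  exact (normal h1.2 hD1).trans (normal h2.2 hD2).symm

end Simplification

section PathGraph

variable {G : Digraph' α} {r u v x : α} {A : Finset α}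

lemma mem_pathGraph_V : v ∈ (G.pathGraph r A).V ↔ ∃ x ∈ A, ∃ p, G.PathFrom r x p ∧ v ∈ p := by
  simp only [pathGraph, Finset.mem_filter]
  exact and_iff_right_of_imp fun ⟨_, _, p, hp, hv⟩ => hp.mem_V v hv

lemma mem_pathGraph_E {e : α × α} :
    e ∈ (G.pathGraph r A).E ↔ ∃ x ∈ A, ∃ p, G.PathFrom r x p ∧ e ∈ pathArcs p := by
  simp only [pathGraph, Multiset.mem_filter]
  exact and_iff_right_of_imp fun ⟨_, _, p, hp, he⟩ => hp.mem_E e he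

lemma mem_E_of_mem_pathGraph_E {e : α × α} (he : e ∈ (G.pathGraph r A).E) : e ∈ G.E :=
  (Multiset.mem_filter.mp he).1

lemma pathGraph_empty (G : Digraph' α) (r : α) : G.pathGraph r ∅ = ⟨∅, 0⟩ := by
  ext1 <;> simp [pathGraph]

lemma nodup_pathGraph_E (hG : G.E.Nodup) (r : α) (A : Finset α) : (G.pathGraph r A).E.Nodup :=
  hG.filter _

lemma IsDAG.pathGraph (hG : G.IsDAG) (r : α) (A : Finset α) : (G.pathGraph r A).IsDAG := by
  refine ⟨fun e he => ?_, fun e he hr => ?_⟩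
  · obtain ⟨x, hx, p, hp, hep⟩ := mem_pathGraph_E.mp he
    exact ⟨mem_pathGraph_V.mpr ⟨x, hx, p, hp, (mem_of_mem_pathArcs hep).1⟩,
      mem_pathGraph_V.mpr ⟨x, hx, p, hp, (mem_of_mem_pathArcs hep).2⟩⟩
  · exact hG.acyclic e (mem_E_of_mem_pathGraph_E he)
      (hr.mono (fun v hv => (Finset.mem_filter.mp hv).1) fun f hf => mem_E_of_mem_pathGraph_E hf)

lemma IsLowestSA.unique {ρ x : α} (hx : x ∈ A) (hρx : G.Reaches ρ x) (hu : G.IsLowestSA ρ A u)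
    (hv : G.IsLowestSA ρ A v) : u = v := by
  by_contra hne
  obtain ⟨p, hp⟩ := hρx
  rcases hp.reaches_or_reaches (hu.1 x hx p hp) (hv.1 x hx p hp) with h | h
  · exact hu.2 v hv.1 (Ne.symm hne) h
  · exact hv.2 u hu.1 hne h

end PathGraph

section Bypass

variable {w p c : α} {l q : List α}

/-- Membership-level description of `l'` being `l` with a segment `p, w, c` shortened to
`p, c` (or `l' = l` when `w ∉ l`). -/
def IsBypass (w p c : α) (l l' : List α) : Prop :=
  (∀ v, v ∈ l' ↔ v ∈ l ∧ v ≠ w) ∧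
    ∀ e, e ∈ pathArcs l' ↔ (e ∈ pathArcs l ∧ e.1 ≠ w ∧ e.2 ≠ w) ∨ (e = (p, c) ∧ (w, c) ∈ pathArcs l)

lemma isBypass_of_notMem (hw : w ∉ l) : IsBypass w p c l l := by
  have hne {v} (hv : v ∈ l) : v ≠ w := fun h => hw (h ▸ hv)
  refine ⟨fun v => ⟨fun hv => ⟨hv, hne hv⟩, And.left⟩, fun e => ⟨fun he => ?_, ?_⟩⟩
  · exact .inl ⟨he, hne (mem_of_mem_pathArcs he).1, hne (mem_of_mem_pathArcs he).2⟩
  · rintro (⟨he, -⟩ | ⟨-, hwc⟩)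
    · exact he
    · exact absurd (mem_of_mem_pathArcs hwc).1 hw

lemma isBypass_append (hw : w ∉ q) (hp : p ≠ w) (hc : c ≠ w) :
    IsBypass w p c (q ++ [p, w, c]) (q ++ [p, c]) := by
  have hq : ∀ e ∈ pathArcs (q ++ [p]), e.1 ≠ w ∧ e.2 ≠ w := fun e he => by
    have := mem_of_mem_pathArcs he
    simp only [mem_append, mem_singleton] at this
    exact ⟨fun h => by rcases this.1 with h' | h' <;> simp_all,
      fun h => by rcases this.2 with h' | h' <;> simp_all⟩
  refine ⟨fun v => ?_, fun e => ?_⟩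
  · simp only [mem_append, mem_cons, not_mem_nil, or_false]
    constructor
    · rintro (hv | rfl | rfl) <;> [exact ⟨.inl hv, fun h => hw (h ▸ hv)⟩; simp [hp]; simp [hc]]
    · rintro ⟨hv | rfl | rfl | rfl, hvw⟩ <;> simp_all
  · rw [pathArcs_append_cons q [c] p, pathArcs_append_cons q [w, c] p]
    simp only [pathArcs_cons_cons, pathArcs_singleton, mem_append, mem_cons, not_mem_nil, or_false]
    constructor
    · rintro (he | rfl)
      · exact .inl ⟨.inl he, hq e he⟩
      · exact .inr ⟨rfl, by simp⟩
    · rintro (⟨he | rfl | rfl, h1, h2⟩ | ⟨rfl, -⟩)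
      · exact .inl he
      · exact absurd rfl h2
      · exact absurd rfl h1
      · exact .inr rfl

end Bypass

end Digraph'

namespace PhyloNet

open Digraph'

variable {α : Type*}

section Basic

variable {N : PhyloNet α} {r v x y : α} {p : List α}

lemma isDAG (N : PhyloNet α) : N.G.IsDAG := ⟨N.wf, N.acyclic⟩

lemma nodup_E (N : PhyloNet α) : N.G.E.Nodup := Multiset.nodup_iff_count_le_one.mpr N.noParallel

lemma mem_V_of_mem_X (hx : x ∈ N.X) : x ∈ N.G.V := by
  rcases N.binary with ⟨hV, -, hX⟩ | ⟨-, -, hleaf, -⟩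
  · rw [hV, ← hX]; exact hx
  · exact (hleaf x hx).1

lemma notMem_E_of_mem_X (hx : x ∈ N.X) : (x, y) ∉ N.G.E := by
  rcases N.binary with ⟨-, hE, -⟩ | ⟨-, -, hleaf, -⟩
  · simp [hE]
  · intro h
    have := (hleaf x hx).2.2
    rw [outDeg, Multiset.card_eq_zero, Multiset.filter_eq_nil] at this
    exact this _ h rfl

lemma ne_root_of_mem_E (h : (x, y) ∈ N.G.E) : y ≠ N.root := by
  rintro rfl
  exact N.acyclic _ h (N.reach x (N.wf _ h).1)

lemma eq_of_mem_X_of_mem (hp : N.G.PathFrom r x p) (hy : y ∈ N.X) (hyp : y ∈ p) : y = x :=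
  hp.eq_of_mem_of_notMem_E hyp fun _ => N.notMem_E_of_mem_X hy

variable [DecidableEq α]

lemma inDeg_eq_one_of_mem_X (hE : N.G.E ≠ 0) (hx : x ∈ N.X) : N.G.inDeg x = 1 := by
  rcases N.binary with ⟨-, hE0, -⟩ | ⟨-, -, hleaf, -⟩
  · exact absurd hE0 hE
  · convert (hleaf x hx).2.1

lemma outDeg_eq_one_of_inDeg_eq_two (hv : v ∈ N.G.V) (h : N.G.inDeg v = 2) :
    N.G.outDeg v = 1 := by
  rcases N.binary with ⟨-, hE0, -⟩ | ⟨hroot, -, hleaf, -, hinner⟩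
  · simp [inDeg, hE0] at h
  have hr : v ≠ N.root := fun hvr => by
    have : N.G.inDeg N.root = 0 := by convert hroot
    rw [← hvr] at this; omega
  have hX : v ∉ N.X := fun hX => by
    have : N.G.inDeg v = 1 := by convert (hleaf v hX).2.1
    omega
  rcases hinner v hv hr hX with ⟨h1, -⟩ | ⟨-, h1⟩
  · have : N.G.inDeg v = 1 := by convert h1
    omega
  · convert h1

end Basic

/-- The configuration of a cut reticulated cherry `(a, b)`: `N` has the arcs `p → pa → a`,
`pa → pb` and `q → pb → b`, and `N'` is `N` without `pa`, `pb` and with the arcs `p → a`,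
`q → b` added. -/
structure CutFacts (N N' : PhyloNet α) (a b pa pb p q : α) : Prop where
  root_eq : N'.root = N.root
  X_eq : N'.X = N.X
  a_mem : a ∈ N.X
  b_mem : b ∈ N.X
  a_ne_b : a ≠ b
  p_pa : (p, pa) ∈ N.G.E
  pa_a : (pa, a) ∈ N.G.E
  q_pb : (q, pb) ∈ N.G.E
  pb_b : (pb, b) ∈ N.G.E
  parent_pa : ∀ y, (y, pa) ∈ N.G.E → y = p
  parent_a : ∀ y, (y, a) ∈ N.G.E → y = pa
  child_pa : ∀ z, (pa, z) ∈ N.G.E → z = a ∨ z = pb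
  child_pb : ∀ z, (pb, z) ∈ N.G.E → z = b
  mem_V : ∀ v, v ∈ N'.G.V ↔ v ∈ N.G.V ∧ v ≠ pa ∧ v ≠ pb
  mem_E : ∀ e, e ∈ N'.G.E ↔
    (e ∈ N.G.E ∧ e.1 ≠ pa ∧ e.2 ≠ pa ∧ e.1 ≠ pb ∧ e.2 ≠ pb) ∨ e = (p, a) ∨ e = (q, b)

namespace CutFacts

variable {N N' : PhyloNet α} {a b pa pb p q r v x : α} {pth l : List α}

lemma pb_notMem (F : CutFacts N N' a b pa pb p q) (hp : N.G.PathFrom r x pth) (hx : x ∈ N.X)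
    (hxb : x ≠ b) : pb ∉ pth := by
  intro hpb
  have hpbx : pb ≠ x := fun h => N.notMem_E_of_mem_X hx (h ▸ F.pb_b)
  obtain ⟨z, hz⟩ := hp.exists_mem_pathArcs hpb hpbx
  obtain rfl := F.child_pb z (hp.mem_E _ hz)
  exact hxb (N.eq_of_mem_X_of_mem hp F.b_mem (mem_of_mem_pathArcs hz).2).symm

lemma pa_a_mem_of_pa_mem (F : CutFacts N N' a b pa pb p q) (hp : N.G.PathFrom r x pth)
    (hx : x ∈ N.X) (hxb : x ≠ b) (hpa : pa ∈ pth) : (pa, a) ∈ pathArcs pth ∧ x = a := by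
  have hpax : pa ≠ x := fun h => N.notMem_E_of_mem_X hx (h ▸ F.pa_a)
  obtain ⟨z, hz⟩ := hp.exists_mem_pathArcs hpa hpax
  rcases F.child_pa z (hp.mem_E _ hz) with rfl | rfl
  · exact ⟨hz, (N.eq_of_mem_X_of_mem hp F.a_mem (mem_of_mem_pathArcs hz).2).symm⟩
  · exact absurd (mem_of_mem_pathArcs hz).2 (F.pb_notMem hp hx hxb)

lemma pathFrom_cut (F : CutFacts N N' a b pa pb p q) (hp : N.G.PathFrom r x pth)
    (hpa : pa ∉ pth) (hpb : pb ∉ pth) : N'.G.PathFrom r x pth := by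
  have hne {v} (hv : v ∈ pth) : v ≠ pa ∧ v ≠ pb := ⟨fun h => hpa (h ▸ hv), fun h => hpb (h ▸ hv)⟩
  refine hp.mono (fun v hv => (F.mem_V _).mpr ⟨hp.mem_V v hv, hne hv⟩) fun e he => ?_
  have h1 := hne (mem_of_mem_pathArcs he).1
  have h2 := hne (mem_of_mem_pathArcs he).2
  exact (F.mem_E e).mpr (.inl ⟨hp.mem_E e he, h1.1, h2.1, h1.2, h2.2⟩)

lemma eq_append_of_pa_mem (F : CutFacts N N' a b pa pb p q) (hp : N.G.PathFrom r x pth)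
    (hx : x ∈ N.X) (hxb : x ≠ b) (hr : r ≠ pa) (hpa : pa ∈ pth) :
    x = a ∧ ∃ l, pth = l ++ [p, pa, a] ∧ N.G.PathFrom r p (l ++ [p]) := by
  obtain ⟨-, rfl⟩ := F.pa_a_mem_of_pa_mem hp hx hxb hpa
  have hra : r ≠ x := by
    rintro rfl
    obtain rfl := hp.eq_singleton fun _ => N.notMem_E_of_mem_X hx
    exact N.isDAG.ne_of_mem_E F.pa_a (List.mem_singleton.mp hpa)
  obtain ⟨l₀, y, rfl, hl₀, hy⟩ := hp.exists_last_arc hra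
  obtain rfl := F.parent_a y hy
  obtain ⟨l, y', hl, hl', hy'⟩ := hl₀.exists_last_arc hr
  obtain rfl := F.parent_pa y' hy'
  obtain rfl : l₀ = l ++ [y'] :=
    append_cancel_right (hl.trans (by simp) : l₀ ++ [y] = (l ++ [y']) ++ [y])
  exact ⟨rfl, l, by simp, hl'⟩

lemma p_a_cut (F : CutFacts N N' a b pa pb p q) : (p, a) ∈ N'.G.E :=
  (F.mem_E _).mpr (.inr (.inl rfl))

lemma a_mem_V_cut (F : CutFacts N N' a b pa pb p q) : a ∈ N'.G.V :=
  mem_V_of_mem_X (F.X_eq ▸ F.a_mem)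

lemma exists_pathFrom_cut (F : CutFacts N N' a b pa pb p q) (hp : N.G.PathFrom r x pth)
    (hx : x ∈ N.X) (hxb : x ≠ b) (hr : r ≠ pa) :
    ∃ pth', N'.G.PathFrom r x pth' ∧ IsBypass pa p a pth pth' := by
  have hpb := F.pb_notMem hp hx hxb
  by_cases hpa : pa ∈ pth
  · obtain ⟨hxa, l, rfl, hl⟩ := F.eq_append_of_pa_mem hp hx hxb hr hpa
    subst x
    have hpal : pa ∉ l := fun h => (nodup_append.mp (hp.nodup N.acyclic)).2.2 pa h pa (by simp) rfl
    have hppa : p ≠ pa := N.isDAG.ne_of_mem_E F.p_pa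
    refine ⟨l ++ [p, a], ?_, isBypass_append hpal hppa (N.isDAG.ne_of_mem_E F.pa_a).symm⟩
    have hl' := F.pathFrom_cut hl (by simp [hpal, hppa.symm])
      (fun h => hpb (by simp only [mem_append, mem_cons] at h ⊢; tauto))
    simpa using hl'.snoc F.p_a_cut F.a_mem_V_cut
  · exact ⟨pth, F.pathFrom_cut hp hpa hpb, isBypass_of_notMem hpa⟩

lemma pathFrom_uncut (F : CutFacts N N' a b pa pb p q) (hp : N'.G.PathFrom r x pth)
    (hb : b ∉ pth) (hpa : (p, a) ∉ pathArcs pth) : N.G.PathFrom r x pth := by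
  refine hp.mono (fun v hv => ((F.mem_V _).mp (hp.mem_V v hv)).1) fun e he => ?_
  rcases (F.mem_E e).mp (hp.mem_E e he) with h | rfl | rfl
  · exact h.1
  · exact absurd he hpa
  · exact absurd (mem_of_mem_pathArcs he).2 hb

lemma parent_a_cut (F : CutFacts N N' a b pa pb p q) {y : α} (hy : (y, a) ∈ N'.G.E) : y = p := by
  rcases (F.mem_E _).mp hy with ⟨h, h1, -⟩ | h | h
  · exact absurd (F.parent_a y h) h1
  · exact (Prod.mk.inj h).1
  · exact absurd (Prod.mk.inj h).2 F.a_ne_b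

lemma eq_append_of_p_a_mem (F : CutFacts N N' a b pa pb p q) (hp : N'.G.PathFrom r x pth)
    (hpa : (p, a) ∈ pathArcs pth) :
    x = a ∧ ∃ l, pth = l ++ [p, a] ∧ N'.G.PathFrom r p (l ++ [p]) := by
  have ha : a ∈ N'.X := F.X_eq ▸ F.a_mem
  obtain rfl := N'.eq_of_mem_X_of_mem hp ha (mem_of_mem_pathArcs hpa).2
  have hra : r ≠ a := by
    rintro rfl
    rw [hp.eq_singleton fun _ => N'.notMem_E_of_mem_X ha] at hpa
    simp at hpa
  obtain ⟨l, y, rfl, hl, hy⟩ := hp.exists_last_arc hra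
  obtain rfl := F.parent_a_cut hy
  exact ⟨rfl, l, rfl, hl⟩

lemma exists_pathFrom_uncut (F : CutFacts N N' a b pa pb p q) (hp : N'.G.PathFrom r x pth)
    (hxb : x ≠ b) : ∃ pth₀, N.G.PathFrom r x pth₀ ∧ IsBypass pa p a pth₀ pth := by
  have hb : b ∉ pth := fun h => hxb (N'.eq_of_mem_X_of_mem hp (F.X_eq ▸ F.b_mem) h).symm
  have hpa : pa ∉ pth := fun h => ((F.mem_V _).mp (hp.mem_V _ h)).2.1 rfl
  by_cases hpa_arc : (p, a) ∈ pathArcs pth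
  · obtain ⟨hxa, l, rfl, hl⟩ := F.eq_append_of_p_a_mem hp hpa_arc
    subst x
    have ha : a ∉ l ++ [p] := fun h => (nodup_append.mp
      (by simpa using hp.nodup N'.acyclic : (l ++ [p] ++ [a]).Nodup)).2.2 a h a (by simp) rfl
    have hl' := F.pathFrom_uncut hl
      (fun h => hb (by simp only [mem_append, mem_cons] at h ⊢; tauto))
      fun h => ha (mem_of_mem_pathArcs h).2
    refine ⟨l ++ [p, pa, a], ?_, isBypass_append (fun h => hpa (mem_append_left _ h))
      (N.isDAG.ne_of_mem_E F.p_pa) (N.isDAG.ne_of_mem_E F.pa_a).symm⟩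
    simpa using (hl'.snoc F.p_pa (N.wf _ F.pa_a).1).snoc F.pa_a (N.wf _ F.pa_a).2
  · exact ⟨pth, F.pathFrom_uncut hp hb hpa_arc, isBypass_of_notMem hpa⟩

variable {u : α} {A : Finset α}

lemma reaches_of_cut (F : CutFacts N N' a b pa pb p q) (h : N'.G.Reaches u v) :
    N.G.Reaches u v := by
  obtain ⟨hu, h'⟩ := (reaches_iff N'.wf).mp h
  refine (reaches_iff N.wf).mpr ⟨((F.mem_V _).mp hu).1, ?_⟩
  clear h
  induction h' with
  | refl => exact .refl
  | tail _ he ih =>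
    rcases (F.mem_E _).mp he with he | he | he
    · exact ih.tail he.1
    · obtain ⟨rfl, rfl⟩ := Prod.mk.inj he
      exact (ih.tail F.p_pa).tail F.pa_a
    · obtain ⟨rfl, rfl⟩ := Prod.mk.inj he
      exact (ih.tail F.q_pb).tail F.pb_b

lemma stableAncestor_of_cut (F : CutFacts N N' a b pa pb p q) (hA : A ⊆ N.X) (hb : b ∉ A)
    (hv : N'.G.StableAncestor N.root A v) : N.G.StableAncestor N.root A v := by
  intro x hx pth hp
  obtain ⟨pth', hp', hbp⟩ := F.exists_pathFrom_cut hp (hA hx) (ne_of_mem_of_not_mem hx hb)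
    (N.ne_root_of_mem_E F.p_pa).symm
  exact ((hbp.1 v).mp (hv x hx pth' hp')).1

lemma stableAncestor_cut (F : CutFacts N N' a b pa pb p q) (hb : b ∉ A)
    (hv : N.G.StableAncestor N.root A v) (hvpa : v ≠ pa) : N'.G.StableAncestor N.root A v := by
  intro x hx pth hp
  obtain ⟨pth₀, hp₀, hbp⟩ := F.exists_pathFrom_uncut hp (ne_of_mem_of_not_mem hx hb)
  exact (hbp.1 v).mpr ⟨hv x hx pth₀ hp₀, hvpa⟩

lemma ne_pa_of_isLowestSA (F : CutFacts N N' a b pa pb p q) (hA : A ⊆ N.X) (hb : b ∉ A)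
    (hr : N.G.IsLowestSA N.root A r) : r ≠ pa := by
  rintro rfl
  refine hr.2 a (fun x hx pth hp => ?_) (N.isDAG.ne_of_mem_E F.pa_a).symm
    (N.isDAG.reaches_of_mem_E F.pa_a)
  obtain ⟨-, rfl⟩ :=
    F.pa_a_mem_of_pa_mem hp (hA hx) (ne_of_mem_of_not_mem hx hb) (hr.1 x hx pth hp)
  exact hp.end_mem

lemma isLowestSA_cut (F : CutFacts N N' a b pa pb p q) (hA : A ⊆ N.X) (hb : b ∉ A)
    (hr : N.G.IsLowestSA N.root A r) : N'.G.IsLowestSA N'.root A r := by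
  rw [F.root_eq]
  refine ⟨F.stableAncestor_cut hb hr.1 (F.ne_pa_of_isLowestSA hA hb hr), fun v hv hvr hrv => ?_⟩
  exact hr.2 v (F.stableAncestor_of_cut hA hb hv) hvr (F.reaches_of_cut hrv)

lemma mem_pathGraph_V_cut (F : CutFacts N N' a b pa pb p q) (hA : A ⊆ N.X) (hb : b ∉ A)
    (hr : r ≠ pa) : v ∈ (N'.G.pathGraph r A).V ↔ v ∈ (N.G.pathGraph r A).V ∧ v ≠ pa := by
  simp only [mem_pathGraph_V]
  constructor
  · rintro ⟨x, hx, pth, hp, hv⟩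
    obtain ⟨pth₀, hp₀, hbp⟩ := F.exists_pathFrom_uncut hp (ne_of_mem_of_not_mem hx hb)
    exact ⟨⟨x, hx, pth₀, hp₀, ((hbp.1 v).mp hv).1⟩, ((hbp.1 v).mp hv).2⟩
  · rintro ⟨⟨x, hx, pth, hp, hv⟩, hvpa⟩
    obtain ⟨pth', hp', hbp⟩ := F.exists_pathFrom_cut hp (hA hx) (ne_of_mem_of_not_mem hx hb) hr
    exact ⟨x, hx, pth', hp', (hbp.1 v).mpr ⟨hv, hvpa⟩⟩

lemma mem_pathGraph_E_cut (F : CutFacts N N' a b pa pb p q) (hA : A ⊆ N.X) (hb : b ∉ A)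
    (hr : r ≠ pa) {e : α × α} : e ∈ (N'.G.pathGraph r A).E ↔
      (e ∈ (N.G.pathGraph r A).E ∧ e.1 ≠ pa ∧ e.2 ≠ pa) ∨
        (e = (p, a) ∧ (pa, a) ∈ (N.G.pathGraph r A).E) := by
  simp only [mem_pathGraph_E]
  constructor
  · rintro ⟨x, hx, pth, hp, he⟩
    obtain ⟨pth₀, hp₀, hbp⟩ := F.exists_pathFrom_uncut hp (ne_of_mem_of_not_mem hx hb)
    rcases (hbp.2 e).mp he with ⟨he₀, hne⟩ | ⟨rfl, hpa⟩
    · exact .inl ⟨⟨x, hx, pth₀, hp₀, he₀⟩, hne⟩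
    · exact .inr ⟨rfl, x, hx, pth₀, hp₀, hpa⟩
  · rintro (⟨⟨x, hx, pth, hp, he⟩, hne⟩ | ⟨rfl, x, hx, pth, hp, he⟩) <;>
    obtain ⟨pth', hp', hbp⟩ := F.exists_pathFrom_cut hp (hA hx) (ne_of_mem_of_not_mem hx hb) hr
    · exact ⟨x, hx, pth', hp', (hbp.2 e).mpr (.inl ⟨he, hne⟩)⟩
    · exact ⟨x, hx, pth', hp', (hbp.2 _).mpr (.inr ⟨rfl, he⟩)⟩

lemma pathGraph_cut_eq (F : CutFacts N N' a b pa pb p q) (hA : A ⊆ N.X) (hb : b ∉ A)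
    (hr : r ≠ pa) (hpa : (pa, a) ∉ (N.G.pathGraph r A).E) :
    N.G.pathGraph r A = N'.G.pathGraph r A := by
  have hpaV : pa ∉ (N.G.pathGraph r A).V := fun h => by
    obtain ⟨x, hx, pth, hp, hpa'⟩ := mem_pathGraph_V.mp h
    exact hpa (mem_pathGraph_E.mpr ⟨x, hx, pth, hp,
      (F.pa_a_mem_of_pa_mem hp (hA hx) (ne_of_mem_of_not_mem hx hb) hpa').1⟩)
  have hne {v} (hv : v ∈ (N.G.pathGraph r A).V) : v ≠ pa := fun h => hpaV (h ▸ hv)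
  ext1
  · ext v
    exact ⟨fun hv => (F.mem_pathGraph_V_cut hA hb hr).mpr ⟨hv, hne hv⟩,
      fun hv => ((F.mem_pathGraph_V_cut hA hb hr).mp hv).1⟩
  refine ((nodup_pathGraph_E N.nodup_E r A).ext (nodup_pathGraph_E N'.nodup_E r A)).mpr fun e => ?_
  rw [F.mem_pathGraph_E_cut hA hb hr]
  refine ⟨fun he => .inl ⟨he, ?_⟩, fun h => ?_⟩
  · have := (N.isDAG.pathGraph r A).mem_V e he
    exact ⟨hne this.1, hne this.2⟩
  · rcases h with ⟨he, -⟩ | ⟨-, he⟩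
    · exact he
    · exact absurd he hpa

lemma pathGraph_suppress [DecidableEq α] (F : CutFacts N N' a b pa pb p q) (hA : A ⊆ N.X)
    (hb : b ∉ A) (hr : r ≠ pa) (hpa : (pa, a) ∈ (N.G.pathGraph r A).E) :
    (N.G.pathGraph r A).Suppress pa (N'.G.pathGraph r A) := by
  have hnd := nodup_pathGraph_E N.nodup_E r A
  obtain ⟨x, hx, pth, hp, hpath⟩ := mem_pathGraph_E.mp hpa
  obtain ⟨-, l, rfl, -⟩ := F.eq_append_of_pa_mem hp (hA hx) (ne_of_mem_of_not_mem hx hb) hr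
    (mem_of_mem_pathArcs hpath).1
  have hppa : (p, pa) ∈ (N.G.pathGraph r A).E :=
    mem_pathGraph_E.mpr ⟨x, hx, _, hp, by rw [pathArcs_append_cons l [pa, a] p]; simp⟩
  have hpb : pb ∉ (N.G.pathGraph r A).V := fun h => by
    obtain ⟨y, hy, pth', hp', hpb⟩ := mem_pathGraph_V.mp h
    exact F.pb_notMem hp' (hA hy) (ne_of_mem_of_not_mem hy hb) hpb
  refine ⟨inDeg_eq_one hnd hppa fun y hy => F.parent_pa y (mem_E_of_mem_pathGraph_E hy),
    outDeg_eq_one hnd hpa fun z hz => ?_, p, a, hppa, hpa, ?_, ?_⟩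
  · refine (F.child_pa z (mem_E_of_mem_pathGraph_E hz)).resolve_right ?_
    rintro rfl
    exact hpb ((N.isDAG.pathGraph r A).mem_V _ hz).2
  · ext v
    rw [F.mem_pathGraph_V_cut hA hb hr, Finset.mem_erase, and_comm]
  · have hpa_N : (p, a) ∉ N.G.E := fun h => N.isDAG.ne_of_mem_E F.p_pa (F.parent_a p h)
    refine ((nodup_pathGraph_E N'.nodup_E r A).ext (Multiset.nodup_add.mpr
      ⟨hnd.filter _, Multiset.nodup_singleton _, Multiset.disjoint_singleton.mpr ?_⟩)).mpr
      fun e => ?_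
    · exact fun h => hpa_N (mem_E_of_mem_pathGraph_E (mem_deleteVertex_E.mp h).1)
    rw [F.mem_pathGraph_E_cut hA hb hr, Multiset.mem_add, Multiset.mem_filter,
      Multiset.mem_singleton]
    simp only [hpa, and_true]

end CutFacts

section Extraction

variable [DecidableEq α] {N N' : PhyloNet α} {a b pa pb p q : α} {G G₁ G₂ G' : Digraph' α}

lemma mem_E_of_erase_of_suppress (hE₁ : G₁.E = G.E.erase (pa, pb))
    (hE₂ : G₂.E = (G₁.deleteVertex pa).E + {(p, a)})
    (hE' : G'.E = (G₂.deleteVertex pb).E + {(q, b)}) (hp : p ≠ pb) (ha : a ≠ pb) (e : α × α) :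
    e ∈ G'.E ↔
      (e ∈ G.E ∧ e.1 ≠ pa ∧ e.2 ≠ pa ∧ e.1 ≠ pb ∧ e.2 ≠ pb) ∨ e = (p, a) ∨ e = (q, b) := by
  rw [hE', Multiset.mem_add, mem_deleteVertex_E, hE₂, Multiset.mem_add, mem_deleteVertex_E, hE₁,
    Multiset.mem_singleton, Multiset.mem_singleton]
  constructor
  · rintro (⟨⟨he, h1, h2⟩ | rfl, h3, h4⟩ | rfl)
    · exact .inl ⟨Multiset.mem_of_mem_erase he, h1, h2, h3, h4⟩
    · exact .inr (.inl rfl)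
    · exact .inr (.inr rfl)
  · rintro (⟨he, h1, h2, h3, h4⟩ | rfl | rfl)
    · refine .inl ⟨.inl ⟨(Multiset.mem_erase_of_ne ?_).mpr he, h1, h2⟩, h3, h4⟩
      rintro rfl
      exact h1 rfl
    · exact .inl ⟨.inr rfl, hp, ha⟩
    · exact .inr rfl

lemma CutRetCherry.exists_cutFacts (h : N.CutRetCherry a b N') :
    ∃ pa pb p q, CutFacts N N' a b pa pb p q := by
  obtain ⟨ha, hb, hab, hX, hroot, pa, pb, hpaa, hpbb, hpapb, hinpb, G₁, hV₁, hE₁, G₂, hs₁, hs₂⟩ :=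
    h
  have hG := N.isDAG
  have mem_G₁ : ∀ e ∈ N.G.E, e ≠ (pa, pb) → e ∈ G₁.E := fun e he hne =>
    hE₁ ▸ (Multiset.mem_erase_of_ne hne).mpr he
  have hpapb' : pa ≠ pb := hG.ne_of_mem_E hpapb
  have hapb : a ≠ pb := fun h => N.notMem_E_of_mem_X ha (h ▸ hpbb)
  have hbpa : b ≠ pa := fun h => N.notMem_E_of_mem_X hb (h ▸ hpapb)
  have hpaa₁ : (pa, a) ∈ G₁.E := mem_G₁ _ hpaa (by simp [hapb])
  obtain ⟨p, -, hp₁, -⟩ := hs₁.exists_arcs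
  have hp : (p, pa) ∈ N.G.E := Multiset.mem_of_mem_erase (hE₁ ▸ hp₁)
  have houtpb := N.outDeg_eq_one_of_inDeg_eq_two (N.wf _ hpbb).1 hinpb
  have hppb : p ≠ pb := by
    rintro rfl
    obtain rfl := eq_of_outDeg_eq_one houtpb hpbb hp
    exact hbpa rfl
  obtain ⟨q, c', hq₂, -⟩ := hs₂.exists_arcs
  have hE₂ := hs₁.E_eq hp₁ hpaa₁
  have hq₁ : (q, pb) ∈ G₁.E := by
    rw [hE₂] at hq₂
    rcases Multiset.mem_add.mp hq₂ with h | h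
    · exact (mem_deleteVertex_E.mp h).1
    · exact absurd (Prod.mk.inj (Multiset.mem_singleton.mp h)).2 hapb.symm
  have hpbb₂ : (pb, b) ∈ G₂.E :=
    hs₁.mem_E_of_ne (mem_G₁ _ hpbb (by simp [hpapb'.symm])) hpapb'.symm hbpa
  refine ⟨pa, pb, p, q, hroot, hX, ha, hb, hab, hp, hpaa,
    Multiset.mem_of_mem_erase (hE₁ ▸ hq₁), hpbb,
    fun y hy => eq_of_inDeg_eq_one hs₁.1 hp₁ (mem_G₁ _ hy (by simp [hpapb'])),
    fun y hy => eq_of_inDeg_eq_one (N.inDeg_eq_one_of_mem_X (by rintro h; simp [h] at hpaa) ha)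
      hpaa hy,
    fun z hz => or_iff_not_imp_right.mpr fun hz' =>
      eq_of_outDeg_eq_one hs₁.2.1 hpaa₁ (mem_G₁ _ hz (by simp [hz'])),
    fun z hz => eq_of_outDeg_eq_one houtpb hpbb hz,
    fun v => by rw [hs₂.V_eq, hs₁.V_eq, hV₁, Finset.mem_erase, Finset.mem_erase]; tauto,
    mem_E_of_erase_of_suppress hE₁ hE₂ (hs₂.E_eq hq₂ hpbb₂) hppb hapb⟩

end Extraction

end PhyloNet

/-- if `N'` is obtained from `N` by cutting a reticulated
cherry `(a, b)` and `b ∉ A`, then `N_A = N'_A`. -/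
theorem exhibited_eq_of_cut_not_mem
    {α : Type*} [DecidableEq α] (N N' : PhyloNet α) (a b : α)
    (h : N.CutRetCherry a b N')
    (A : Finset α) (hA : A ⊆ N.X) (hb : b ∉ A)
    (HA HA' : Digraph' α)
    (h1 : N.Exhibits A HA) (h2 : N'.Exhibits A HA') :
    HA = HA' := by
  obtain ⟨pa, pb, p, q, F⟩ := h.exists_cutFacts
  obtain ⟨r, hr, hHA⟩ := h1
  obtain ⟨r', hr', hHA'⟩ := h2
  have hPG : N.G.pathGraph r A = N'.G.pathGraph r' A ∨
      (N.G.pathGraph r A).Suppress pa (N'.G.pathGraph r' A) := by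
    rcases A.eq_empty_or_nonempty with rfl | ⟨x, hx⟩
    · exact .inl (by rw [Digraph'.pathGraph_empty, Digraph'.pathGraph_empty])
    obtain rfl : r = r' := (F.isLowestSA_cut hA hb hr).unique hx
      (N'.reach x (PhyloNet.mem_V_of_mem_X (F.X_eq ▸ hA hx))) hr'
    have hrpa := F.ne_pa_of_isLowestSA hA hb hr
    by_cases hpa : (pa, a) ∈ (N.G.pathGraph r A).E
    · exact .inr (F.pathGraph_suppress hA hb hrpa hpa)
    · exact .inl (F.pathGraph_cut_eq hA hb hrpa hpa)
  have hDAG := N.isDAG.pathGraph r A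
  rcases hPG with hPG | hPG
  · exact hHA.unique hDAG (hPG ▸ hHA')
  · exact hHA.unique hDAG ⟨.head (.inl ⟨pa, hPG⟩) hHA'.1, hHA'.2⟩
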